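/- Fix a = 1/(2m − 1) with m a positive integer, and consider the strip-crossing recurrences with initial data a_0 = a, α_0 ∈ {0, 1}, and h_0 = ℓ·a where 2ℓ is a positive odd integer (so ℓ is a half-integer that is not an integer). Then the trajectory is periodic: for all n ∈ ℕ, a_n = a, α_n = α_0, and h_{n+2} = h_n. -/

import Mathlib

/-- One step of the strip-crossing recurrences: from the triple `(h_n, a_n, α_n)`
compute `γ_n = ⌊(1 − a_n)/a⌋`, `β_n = a·frac((1 − a_n)/a)`, and then
`h_{n+1} = −(h_n + (−1)^{α_n}·(a_n + (−1)^{γ_n+1}·β_n − (1 − (−1)^{γ_n})·a/2))`,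
`α_{n+1} = (α_n + γ_n + 1 + ⌊(2|h_{n+1}| + β_n)/a⌋) mod 2`,
`a_{n+1} = a·(1 − frac((2|h_{n+1}| + β_n)/a))`. -/
noncomputable def stripStep (a : ℝ) (s : ℝ × ℝ × ℤ) : ℝ × ℝ × ℤ :=
  let h := s.1
  let an := s.2.1
  let α := s.2.2
  let γ : ℤ := ⌊(1 - an) / a⌋
  let β : ℝ := a * Int.fract ((1 - an) / a)
  let h' : ℝ :=
    -(h + (-1 : ℝ) ^ α * (an + (-1 : ℝ) ^ (γ + 1) * β - (1 - (-1 : ℝ) ^ γ) * a / 2))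
  let α' : ℤ := (α + γ + 1 + ⌊(2 * |h'| + β) / a⌋) % 2
  let a' : ℝ := a * (1 - Int.fract ((2 * |h'| + β) / a))
  (h', a', α')

/-!
Since `1/a = 2m − 1` is an odd integer, `(1 − a)/a` is an even integer; so whenever `a_n = a`
we get `γ_n` even and `β_n = 0`, and the step reduces to `h ↦ −(h + (−1)^α a)`. This map sends
odd multiples of `a/2` to odd multiples of `a/2`, so `2|h_{n+1}|/a` is then an odd integer: its
fractional part vanishes, giving `a_{n+1} = a`, and its parity cancels that of `γ_n + 1`, giving
`α_{n+1} = α_n`. The reduced step applied twice is the identity on `h`.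
-/

namespace StripStep

variable {a : ℝ} {k : ℤ}

lemma ne_zero_of_inv_eq_odd (hk : Odd k) (ha : a⁻¹ = k) : a ≠ 0 := by
  rintro rfl
  simp_all [eq_comm]

lemma one_sub_div_eq (hk : Odd k) (ha : a⁻¹ = k) : (1 - a) / a = ((k - 1 : ℤ) : ℝ) := by
  rw [sub_div, one_div, div_self (ne_zero_of_inv_eq_odd hk ha), ha]
  push_cast
  ring

lemma exists_odd_two_mul_abs_div (ha : a ≠ 0) {i : ℤ} (hi : Odd i) :
    ∃ n : ℤ, Odd n ∧ 2 * |i * a / 2| / a = n := by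
  have h2 : 2 * |i * a / 2| = |(i : ℝ)| * |a| := by
    rw [mul_div_assoc, abs_mul, abs_div, abs_two]; field_simp
  rcases abs_choice a with h | h
  · exact ⟨|i|, odd_abs.mpr hi, by rw [h2, h]; push_cast; field_simp⟩
  · exact ⟨-|i|, (odd_abs.mpr hi).neg, by rw [h2, h]; push_cast; field_simp⟩

lemma stripStep_odd_mul_half (hk : Odd k) (ha : a⁻¹ = k) {i : ℤ} (hi : Odd i) (α : ℤ) :
    stripStep a (i * a / 2, a, α) =
      (((-(i + 2 * α.negOnePow) : ℤ) : ℝ) * a / 2, a, α % 2) := by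
  have hfloor : ⌊(1 - a) / a⌋ = k - 1 := by rw [one_sub_div_eq hk ha, Int.floor_intCast]
  have hfract : Int.fract ((1 - a) / a) = 0 := by rw [one_sub_div_eq hk ha, Int.fract_intCast]
  have hpow : (-1 : ℝ) ^ (k - 1) = 1 := (hk.sub_odd odd_one).neg_one_zpow
  have hh : -(i * a / 2 + (-1 : ℝ) ^ α * a) = (((-(i + 2 * α.negOnePow) : ℤ) : ℝ) * a / 2) := by
    push_cast [Int.cast_negOnePow]; ring
  have hi' : Odd (-(i + 2 * (α.negOnePow : ℤ))) := (hi.add_even (even_two_mul _)).neg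
  obtain ⟨n, hn, hdiv⟩ := exists_odd_two_mul_abs_div (ne_zero_of_inv_eq_odd hk ha) hi'
  simp only [stripStep, hfloor, hfract, hpow, mul_zero, zero_mul, add_zero, sub_self,
    zero_div, sub_zero, hh, hdiv, Int.floor_intCast, Int.fract_intCast, mul_one]
  refine Prod.ext rfl (Prod.ext rfl ?_)
  obtain ⟨s, rfl⟩ := hk
  obtain ⟨t, rfl⟩ := hn
  dsimp only
  omega

lemma stripStep_iterate_two_odd_mul_half (hk : Odd k) (ha : a⁻¹ = k) {i : ℤ} (hi : Odd i)
    {α : ℤ} (hα : α % 2 = α) :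
    (stripStep a)^[2] (i * a / 2, a, α) = (i * a / 2, a, α) := by
  rw [Function.iterate_succ_apply', Function.iterate_one, stripStep_odd_mul_half hk ha hi, hα,
    stripStep_odd_mul_half hk ha ((hi.add_even (even_two_mul _)).neg), hα]
  push_cast
  ring_nf

lemma exists_iterate_eq_odd_mul_half (hk : Odd k) (ha : a⁻¹ = k) {i : ℤ} (hi : Odd i)
    {α : ℤ} (hα : α % 2 = α) (n : ℕ) :
    ∃ j : ℤ, Odd j ∧ (stripStep a)^[n] (i * a / 2, a, α) = (j * a / 2, a, α) := by
  induction n with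
  | zero => exact ⟨i, hi, rfl⟩
  | succ n ih =>
    obtain ⟨j, hj, hn⟩ := ih
    rw [Function.iterate_succ_apply', hn, stripStep_odd_mul_half hk ha hj, hα]
    exact ⟨_, (hj.add_even (even_two_mul _)).neg, rfl⟩

end StripStep

open StripStep in
theorem stripStep_periodic_general (m : ℕ) (a : ℝ)
    (ha : a = 1 / (2 * (m : ℝ) - 1))
    (α₀ : ℤ) (hα₀ : α₀ = 0 ∨ α₀ = 1)
    (ℓ : ℝ) (hℓ : ∃ j : ℤ, 0 < j ∧ Odd j ∧ 2 * ℓ = (j : ℝ))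
    (h₀ : ℝ) (hh₀ : h₀ = ℓ * a) :
    ∀ n : ℕ, ((stripStep a)^[n] (h₀, a, α₀)).2.1 = a ∧
      ((stripStep a)^[n] (h₀, a, α₀)).2.2 = α₀ ∧
      ((stripStep a)^[n + 2] (h₀, a, α₀)).1 = ((stripStep a)^[n] (h₀, a, α₀)).1 := by
  obtain ⟨i, -, hi, hiℓ⟩ := hℓ
  have hk : Odd (2 * (m : ℤ) - 1) := ⟨m - 1, by ring⟩
  have ha' : a⁻¹ = ((2 * (m : ℤ) - 1 : ℤ) : ℝ) := by rw [ha]; push_cast; simp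
  have hα : α₀ % 2 = α₀ := by omega
  have hh : h₀ = i * a / 2 := by rw [hh₀, ← hiℓ]; ring
  intro n
  obtain ⟨j, hj, hn⟩ := exists_iterate_eq_odd_mul_half hk ha' hi hα n
  rw [hh, add_comm, Function.iterate_add_apply, hn,
    stripStep_iterate_two_odd_mul_half hk ha' hj hα]
  exact ⟨rfl, rfl, rfl⟩

/-- For `a = 1/(2m − 1)` with `m` a positive integer and initial data `a₀ = a`,
`α₀ ∈ {0, 1}`, `h₀ = ℓ·a` with `2ℓ` a positive odd integer, the trajectory is
periodic: `a_n = a`, `α_n = α₀`, and `h_{n+2} = h_n` for all `n`. -/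
theorem stripStep_periodic (m : ℕ) (hm : 0 < m) (a : ℝ)
    (ha : a = 1 / (2 * (m : ℝ) - 1))
    (α₀ : ℤ) (hα₀ : α₀ = 0 ∨ α₀ = 1)
    (ℓ : ℝ) (hℓ : ∃ j : ℤ, 0 < j ∧ Odd j ∧ 2 * ℓ = (j : ℝ))
    (h₀ : ℝ) (hh₀ : h₀ = ℓ * a) :
    ∀ n : ℕ, ((stripStep a)^[n] (h₀, a, α₀)).2.1 = a ∧
      ((stripStep a)^[n] (h₀, a, α₀)).2.2 = α₀ ∧
      ((stripStep a)^[n + 2] (h₀, a, α₀)).1 = ((stripStep a)^[n] (h₀, a, α₀)).1 :=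
  stripStep_periodic_general m a ha α₀ hα₀ ℓ hℓ h₀ hh₀
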